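/- arXiv:1706.08250 — 3 statements merged into one kernel-verified Lean document; each statement's English description precedes it below -/
import Mathlib

section
/- For any nondecreasing sequence of critical values τ = (τ_1, …, τ_m) ∈ [0,1]^m, the false discovery rate of the step-up procedure SU(τ) satisfies FDR(SU(τ)) ≤ Σ_{i=1}^m max_{1 ≤ k ≤ m} F_i(τ_k)/k. -/
open MeasureTheory ProbabilityTheory Finset

/-- Number of rejections of the step-up procedure with critical values `τ 1, …, τ m`
(convention `τ 0 = 0`): the largest `k ∈ {0, …, m}` such that at least `k` of the
p-values are `≤ τ k`. -/
noncomputable def numRejSU (m : ℕ) (τ : ℕ → ℝ) (q : Fin m → ℝ) : ℕ :=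
  sSup {k | k ≤ m ∧ k ≤ (univ.filter (fun j => q j ≤ τ k)).card}

/-- Rejection set of the step-up procedure. -/
noncomputable def rejSU (m : ℕ) (τ : ℕ → ℝ) (q : Fin m → ℝ) : Finset (Fin m) :=
  univ.filter (fun i => q i ≤ τ (numRejSU m τ q))

/-- False discovery proportion of a rejection set `R` w.r.t. the set of true nulls `H0`. -/
noncomputable def FDP (m : ℕ) (H0 R : Finset (Fin m)) : ℝ :=
  ((R ∩ H0).card : ℝ) / max (R.card : ℝ) 1

/-!
Write `K_i` for the number of rejections of `SU(τ)` once `p_i` is replaced by `0`. If `i` is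
rejected, this replacement does not change the step-up index, so
`FDP = ∑_{i ∈ H_0} 1{p_i ≤ τ_{K_i}} / K_i`. Since `K_i ∈ [1, m]` depends only on `(p_j)_{j ≠ i}`,
it is independent of `p_i`, and `E[1{p_i ≤ τ_{K_i}} / K_i] = ∑_k P(K_i = k) P(p_i ≤ τ_k) / k`
is at most `max_k F_i(τ_k) / k`.
-/

section StepUp

variable {m : ℕ} {τ : ℕ → ℝ} {q q' : Fin m → ℝ}

theorem numRejSU_mem (m : ℕ) (τ : ℕ → ℝ) (q : Fin m → ℝ) :
    numRejSU m τ q ≤ m ∧ numRejSU m τ q ≤ #{j | q j ≤ τ (numRejSU m τ q)} :=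
  Nat.sSup_mem (s := {k | k ≤ m ∧ k ≤ #{j | q j ≤ τ k}}) ⟨0, Nat.zero_le _, Nat.zero_le _⟩
    ⟨m, fun _ hk => hk.1⟩

theorem le_numRejSU {k : ℕ} (hkm : k ≤ m) (hk : k ≤ #{j | q j ≤ τ k}) : k ≤ numRejSU m τ q :=
  le_csSup ⟨m, fun _ hl => hl.1⟩ ⟨hkm, hk⟩

theorem numRejSU_le_numRejSU (h : ∀ k ≤ m, #{j | q j ≤ τ k} ≤ #{j | q' j ≤ τ k}) :
    numRejSU m τ q ≤ numRejSU m τ q' :=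
  have ⟨hm, hcard⟩ := numRejSU_mem m τ q
  le_numRejSU hm (hcard.trans (h _ hm))

theorem numRejSU_eq_sup' (m : ℕ) (τ : ℕ → ℝ) (q : Fin m → ℝ) :
    numRejSU m τ q = (range (m + 1)).sup' nonempty_range_add_one
      (fun k => if k ≤ #{j | q j ≤ τ k} then k else 0) := by
  refine le_antisymm ?_ (sup'_le _ _ fun k hk => ?_)
  · have ⟨hm, hcard⟩ := numRejSU_mem m τ q
    exact le_sup'_of_le _ (mem_range_succ_iff.mpr hm) (by rw [if_pos hcard])
  · split_ifs with hcard
    exacts [le_numRejSU (mem_range_succ_iff.mp hk) hcard, Nat.zero_le _]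

theorem measurable_numRejSU (m : ℕ) (τ : ℕ → ℝ) : Measurable (numRejSU m τ) := by
  have hcard (t : ℝ) : Measurable fun q : Fin m → ℝ => #{j | q j ≤ t} := by
    simp_rw [card_filter]
    exact Finset.measurable_sum _ fun j _ =>
      Measurable.ite (measurableSet_le (measurable_pi_apply j) measurable_const)
        measurable_const measurable_const
  simp_rw [funext (numRejSU_eq_sup' m τ)]
  exact Finset.measurable_range_sup'' fun k _ =>
    Measurable.ite (measurableSet_le measurable_const (hcard _)) measurable_const measurable_const

theorem card_rejSU (hτ : ∀ k l, k ≤ l → l ≤ m → τ k ≤ τ l) :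
    #(rejSU m τ q) = numRejSU m τ q := by
  have ⟨hm, hcard⟩ := numRejSU_mem m τ q
  refine le_antisymm ?_ hcard
  by_contra! hlt
  have hlt_m : numRejSU m τ q < m := hlt.trans_le (card_filter_le _ _ |>.trans (card_fin m).le)
  have hsucc : numRejSU m τ q + 1 ≤ #{j | q j ≤ τ (numRejSU m τ q + 1)} :=
    hlt.trans_le <| card_le_card <| monotone_filter_right _ fun j _ hj =>
      hj.trans (hτ _ _ (Nat.le_succ _) hlt_m)
  exact (le_numRejSU hlt_m hsucc).not_gt (Nat.lt_succ_self _)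

variable {i : Fin m} {c : ℝ}

theorem numRejSU_le_numRejSU_update (hc : ∀ k ≤ m, c ≤ τ k) :
    numRejSU m τ q ≤ numRejSU m τ (Function.update q i c) :=
  numRejSU_le_numRejSU fun k hk => card_le_card <| monotone_filter_right _ fun j _ hj => by
    rcases eq_or_ne j i with rfl | hji
    · simpa using hc k hk
    · simpa [hji] using hj

theorem numRejSU_update_eq (hc : ∀ k ≤ m, c ≤ τ k)
    (hi : q i ≤ τ (numRejSU m τ (Function.update q i c))) :
    numRejSU m τ (Function.update q i c) = numRejSU m τ q := by
  have ⟨hm, hcard⟩ := numRejSU_mem m τ (Function.update q i c)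
  refine le_antisymm (le_numRejSU hm (hcard.trans (card_le_card (monotone_filter_right _
    fun j _ hj => ?_)))) (numRejSU_le_numRejSU_update hc)
  rcases eq_or_ne j i with rfl | hji
  · exact hi
  · simpa [hji] using hj

theorem le_tau_numRejSU_update_iff (hτ : ∀ k l, k ≤ l → l ≤ m → τ k ≤ τ l)
    (hc : ∀ k ≤ m, c ≤ τ k) :
    q i ≤ τ (numRejSU m τ (Function.update q i c)) ↔ q i ≤ τ (numRejSU m τ q) :=
  ⟨fun hi => numRejSU_update_eq hc hi ▸ hi, fun hi =>
    hi.trans (hτ _ _ (numRejSU_le_numRejSU_update hc) (numRejSU_mem m τ _).1)⟩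

theorem one_le_numRejSU_update (hm : 1 ≤ m) (hc : c ≤ τ 1) :
    1 ≤ numRejSU m τ (Function.update q i c) :=
  le_numRejSU hm (card_pos.mpr ⟨i, by simpa using hc⟩)

theorem FDP_eq_sum (H0 R : Finset (Fin m)) :
    FDP m H0 R = ∑ i ∈ H0, if i ∈ R then (#R : ℝ)⁻¹ else 0 := by
  rw [FDP, inter_comm, ← filter_mem_eq_inter, card_filter, Nat.cast_sum, sum_div]
  refine sum_congr rfl fun i _ => ?_
  split_ifs with hi
  · rw [max_eq_left (by exact_mod_cast card_pos.mpr ⟨i, hi⟩), Nat.cast_one, one_div]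
  · rw [Nat.cast_zero, zero_div]

theorem FDP_rejSU_eq_sum (hτ : ∀ k l, k ≤ l → l ≤ m → τ k ≤ τ l) (hc : ∀ k ≤ m, c ≤ τ k)
    (H0 : Finset (Fin m)) :
    FDP m H0 (rejSU m τ q) = ∑ i ∈ H0,
      if q i ≤ τ (numRejSU m τ (Function.update q i c))
      then (numRejSU m τ (Function.update q i c) : ℝ)⁻¹ else 0 := by
  rw [FDP_eq_sum]
  refine sum_congr rfl fun i _ => ?_
  by_cases hi : q i ≤ τ (numRejSU m τ (Function.update q i c))
  · have hrej : i ∈ rejSU m τ q := by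
      simpa [rejSU] using (le_tau_numRejSU_update_iff hτ hc).mp hi
    rw [if_pos hrej, if_pos hi, card_rejSU hτ, numRejSU_update_eq hc hi]
  · have hrej : i ∉ rejSU m τ q := by
      simpa [rejSU] using mt (le_tau_numRejSU_update_iff hτ hc).mpr hi
    rw [if_neg hrej, if_neg hi]

end StepUp

theorem ProbabilityTheory.iIndepFun.indepFun_comp_update {Ω ι β γ : Type*}
    [MeasurableSpace Ω] [MeasurableSpace β] [MeasurableSpace γ] [Fintype ι] [DecidableEq ι]
    {P : Measure Ω} {X : ι → Ω → β}
    (hX : iIndepFun X P) (hmeas : ∀ i, Measurable (X i)) (i : ι) (c : β)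
    {g : (ι → β) → γ} (hg : Measurable g) :
    IndepFun (X i) (fun ω => g (Function.update (fun j => X j ω) i c)) P := by
  have hext : Measurable fun v : (({i}ᶜ : Finset ι) : Type _) → β =>
      g fun j => if hj : j ∈ ({i}ᶜ : Finset ι) then v ⟨j, hj⟩ else c := by
    refine hg.comp (measurable_pi_lambda _ fun j => ?_)
    split_ifs
    exacts [measurable_pi_apply _, measurable_const]
  convert (hX.indepFun_finset {i} {i}ᶜ disjoint_compl_right hmeas).comp
    (measurable_pi_apply ⟨i, mem_singleton_self i⟩) hext using 1
  · rfl
  · ext ω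
    simp only [Function.comp_apply, mem_compl, mem_singleton, dite_not]
    congr 1
    ext j
    rcases eq_or_ne j i with rfl | hji <;> simp [*]

section RandomThreshold

variable {Ω : Type*} {X : Ω → ℝ} {N : Ω → ℕ} {s : Finset ℕ}

theorem ite_le_eq_sum_indicator (hNs : ∀ ω, N ω ∈ s) (t a : ℕ → ℝ) (ω : Ω) :
    (if X ω ≤ t (N ω) then a (N ω) else 0) =
      ∑ k ∈ s, (N ⁻¹' {k} ∩ X ⁻¹' Set.Iic (t k)).indicator (fun _ => a k) ω := by
  rw [sum_eq_single_of_mem _ (hNs ω) fun k _ hk => Set.indicator_of_notMem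
    (fun hω => hk hω.1.symm) _]
  by_cases h : X ω ≤ t (N ω)
  · rw [if_pos h, Set.indicator_of_mem (s := N ⁻¹' {N ω} ∩ X ⁻¹' Set.Iic (t (N ω))) ⟨rfl, h⟩]
  · rw [if_neg h, Set.indicator_of_notMem fun hω => h hω.2]

variable [MeasurableSpace Ω] {P : Measure Ω}

theorem integrable_ite_le [IsFiniteMeasure P] (hX : Measurable X) (hN : Measurable N)
    (hNs : ∀ ω, N ω ∈ s) (t a : ℕ → ℝ) :
    Integrable (fun ω => if X ω ≤ t (N ω) then a (N ω) else 0) P := by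
  rw [funext (ite_le_eq_sum_indicator hNs t a)]
  exact integrable_finsetSum _ fun k _ =>
    (integrable_const _).indicator ((hN (measurableSet_singleton k)).inter (hX measurableSet_Iic))

/-- Conditioning on the independent index `N` makes the expectation a convex combination of the
values `P(X ≤ t k) * a k`, `k ∈ s`. -/
theorem integral_ite_le_le_sup' [IsProbabilityMeasure P] (hX : Measurable X) (hN : Measurable N)
    (hXN : IndepFun X N P) (hs : s.Nonempty) (hNs : ∀ ω, N ω ∈ s) (t a : ℕ → ℝ) :
    ∫ ω, (if X ω ≤ t (N ω) then a (N ω) else 0) ∂P ≤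
      s.sup' hs fun k => P.real {ω | X ω ≤ t k} * a k := by
  have hmeas (k : ℕ) : MeasurableSet (N ⁻¹' {k}) := hN (measurableSet_singleton k)
  have hinter (k : ℕ) : P.real (N ⁻¹' {k} ∩ X ⁻¹' Set.Iic (t k)) =
      P.real (N ⁻¹' {k}) * P.real {ω | X ω ≤ t k} := by
    rw [measureReal_def, hXN.symm.measure_inter_preimage_eq_mul _ _ (measurableSet_singleton k)
      measurableSet_Iic, ENNReal.toReal_mul]
    rfl
  have htotal : ∑ k ∈ s, P.real (N ⁻¹' {k}) = 1 := by
    rw [sum_measureReal_preimage_singleton s fun k _ => hmeas k,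
      Set.preimage_eq_univ_iff.mpr fun _ ⟨ω, hω⟩ => hω ▸ hNs ω, probReal_univ]
  rw [funext (ite_le_eq_sum_indicator hNs t a), integral_finsetSum _ fun k _ =>
    (integrable_const _).indicator ((hmeas k).inter (hX measurableSet_Iic))]
  calc ∑ k ∈ s, ∫ ω, (N ⁻¹' {k} ∩ X ⁻¹' Set.Iic (t k)).indicator (fun _ => a k) ω ∂P
      = ∑ k ∈ s, P.real (N ⁻¹' {k}) * (P.real {ω | X ω ≤ t k} * a k) := by
        refine sum_congr rfl fun k _ => ?_
        rw [integral_indicator_const _ ((hmeas k).inter (hX measurableSet_Iic)), hinter,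
          smul_eq_mul, mul_assoc]
    _ ≤ ∑ k ∈ s, P.real (N ⁻¹' {k}) * s.sup' hs fun k => P.real {ω | X ω ≤ t k} * a k :=
        sum_le_sum fun k hk => mul_le_mul_of_nonneg_left
          (le_sup' (fun k => P.real {ω | X ω ≤ t k} * a k) hk) measureReal_nonneg
    _ = s.sup' hs fun k => P.real {ω | X ω ≤ t k} * a k := by rw [← sum_mul, htotal, one_mul]

end RandomThreshold

theorem fdr_su_le_sum_max_general
    {Ω : Type*} [MeasurableSpace Ω] (P : Measure Ω) [IsProbabilityMeasure P]
    (m : ℕ) (hm : 1 ≤ m)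
    (p : Fin m → Ω → ℝ) (hmeas : ∀ i, Measurable (p i))
    (hindep : iIndepFun p P)
    (H0 : Finset (Fin m))
    (F : Fin m → ℝ → ℝ)
    (hFrange : ∀ i, ∀ t ∈ Set.Icc (0 : ℝ) 1, F i t ∈ Set.Icc (0 : ℝ) 1)
    (hnull : ∀ i ∈ H0, ∀ t ∈ Set.Icc (0 : ℝ) 1,
      P {ω | p i ω ≤ t} ≤ ENNReal.ofReal (F i t))
    (τ : ℕ → ℝ)
    (hτmono : ∀ k l, k ≤ l → l ≤ m → τ k ≤ τ l)
    (hτ01 : ∀ k ≤ m, τ k ∈ Set.Icc (0 : ℝ) 1)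
    :
    ∫ ω, FDP m H0 (rejSU m τ (fun j => p j ω)) ∂P
      ≤ ∑ i : Fin m, (Finset.Icc 1 m).sup' (Finset.nonempty_Icc.mpr hm)
          (fun k => F i (τ k) / (k : ℝ)) := by
  set N : Fin m → Ω → ℕ := fun i ω => numRejSU m τ (Function.update (fun j => p j ω) i 0)
  have hτ_nonneg (k : ℕ) (hk : k ≤ m) : 0 ≤ τ k := (hτ01 k hk).1
  have hN (i : Fin m) : Measurable (N i) :=
    (measurable_numRejSU m τ).comp (measurable_update_left.comp (measurable_pi_lambda _ hmeas))
  have hNs (i : Fin m) (ω : Ω) : N i ω ∈ Icc 1 m :=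
    mem_Icc.mpr ⟨one_le_numRejSU_update hm (hτ_nonneg 1 hm), (numRejSU_mem m τ _).1⟩
  have hnull_real (i : Fin m) (hi : i ∈ H0) (k : ℕ) (hk : k ≤ m) :
      P.real {ω | p i ω ≤ τ k} ≤ F i (τ k) :=
    ENNReal.toReal_le_of_le_ofReal (hFrange i _ (hτ01 k hk)).1 (hnull i hi _ (hτ01 k hk))
  have hsup_nonneg (i : Fin m) : 0 ≤ (Icc 1 m).sup' (nonempty_Icc.mpr hm)
      (fun k => F i (τ k) / (k : ℝ)) :=
    le_sup'_of_le _ (left_mem_Icc.mpr hm) (by simpa using (hFrange i _ (hτ01 1 hm)).1)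
  calc ∫ ω, FDP m H0 (rejSU m τ (fun j => p j ω)) ∂P
      = ∑ i ∈ H0, ∫ ω, (if p i ω ≤ τ (N i ω) then (N i ω : ℝ)⁻¹ else 0) ∂P := by
        simp_rw [FDP_rejSU_eq_sum hτmono hτ_nonneg]
        exact integral_finsetSum _ fun i _ =>
          integrable_ite_le (hmeas i) (hN i) (hNs i) τ fun k => (k : ℝ)⁻¹
    _ ≤ ∑ i ∈ H0, (Icc 1 m).sup' (nonempty_Icc.mpr hm)
          (fun k => P.real {ω | p i ω ≤ τ k} * (k : ℝ)⁻¹) :=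
        sum_le_sum fun i _ => integral_ite_le_le_sup' (hmeas i) (hN i)
          (hindep.indepFun_comp_update hmeas i 0 (measurable_numRejSU m τ)) _ (hNs i)
          τ fun k => (k : ℝ)⁻¹
    _ ≤ ∑ i ∈ H0, (Icc 1 m).sup' (nonempty_Icc.mpr hm) (fun k => F i (τ k) / (k : ℝ)) :=
        sum_le_sum fun i hi => sup'_mono_fun fun k hk => by
          rw [div_eq_mul_inv]
          gcongr
          exact hnull_real i hi k (mem_Icc.mp hk).2
    _ ≤ _ := sum_le_sum_of_subset_of_nonneg (subset_univ H0) fun i _ _ => hsup_nonneg i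

/-- `FDR(SU(τ)) ≤ ∑_{i=1}^m max_{1 ≤ k ≤ m} F_i(τ_k)/k`. -/
theorem fdr_su_le_sum_max
    {Ω : Type*} [MeasurableSpace Ω] (P : Measure Ω) [IsProbabilityMeasure P]
    (m : ℕ) (hm : 1 ≤ m)
    (p : Fin m → Ω → ℝ) (hmeas : ∀ i, Measurable (p i))
    (hp01 : ∀ i ω, p i ω ∈ Set.Icc (0 : ℝ) 1)
    (hindep : iIndepFun p P)
    (H0 : Finset (Fin m))
    (F : Fin m → ℝ → ℝ)
    (hFmono : ∀ i, MonotoneOn (F i) (Set.Icc 0 1))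
    (hFrange : ∀ i, ∀ t ∈ Set.Icc (0 : ℝ) 1, F i t ∈ Set.Icc (0 : ℝ) 1)
    (hF0 : ∀ i, F i 0 = 0) (hF1 : ∀ i, F i 1 = 1)
    (hnull : ∀ i ∈ H0, ∀ t ∈ Set.Icc (0 : ℝ) 1,
      P {ω | p i ω ≤ t} ≤ ENNReal.ofReal (F i t))
    (τ : ℕ → ℝ) (hτ0 : τ 0 = 0)
    (hτmono : ∀ k l, k ≤ l → l ≤ m → τ k ≤ τ l)
    (hτ01 : ∀ k ≤ m, τ k ∈ Set.Icc (0 : ℝ) 1)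
    :
    ∫ ω, FDP m H0 (rejSU m τ (fun j => p j ω)) ∂P
      ≤ ∑ i : Fin m, (Finset.Icc 1 m).sup' (Finset.nonempty_Icc.mpr hm)
          (fun k => F i (τ k) / (k : ℝ)) :=
  fdr_su_le_sum_max_general P m hm p hmeas hindep H0 F hFrange hnull τ hτmono hτ01
end

section
/- Assume additionally that the null p-values are super-uniform, i.e. P(p_i ≤ t) ≤ t for all t ∈ [0,1] and all i ∈ H_0. Then for any nondecreasing sequence of critical values τ = (τ_1, …, τ_m) ∈ [0,1]^m with τ_k < 1 for all k, the false discovery rate of the step-down procedure SD(τ) satisfies FDR(SD(τ)) ≤ max_{1 ≤ k ≤ m} ((m−k+1)/(1−τ_k)) · (τ_k/k). In particular, the Gavrilov–Benjamini–Sarkar step-down procedure, given by τ_k = αk/(m−(1−α)k+1) for α ∈ (0,1), satisfies FDR ≤ α. -/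
/-!
Let `A_i` be the number of rejections of the step-down procedure run without the `i`-th p-value,
and `N` that of the full procedure. Deterministically, a rejected `i` has `p_i ≤ τ_{A_i+1}` and
`A_i + 1 ≤ N ≤ |R|`, so `FDP ≤ ∑_{i ∈ H₀} 1{p_i ≤ τ_{A_i+1}} / (A_i + 1)`; and `p_i > τ_{A_i+1}`
forces `N = A_i`, whence `∑_i 1{p_i > τ_{A_i+1}} / (m - A_i) ≤ 1`. Since `A_i` is independent of
`p_i`, super-uniformity gives, on `{A_i = a}` and with `C` the maximum in the bound,
`P(p_i ≤ τ_{a+1}) / (a+1) ≤ τ_{a+1} / (a+1) ≤ C (1 - τ_{a+1}) / (m - a)`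
`≤ C P(p_i > τ_{a+1}) / (m - a)`.
Taking expectations and summing over `i` gives `FDR ≤ C`. For the Gavrilov–Benjamini–Sarkar
critical values every term of the maximum equals `α`.
-/

open MeasureTheory ProbabilityTheory Finset

/-- Number of rejections of the step-down procedure with critical values `τ 1, …, τ m`
(convention `τ 0 = 0`). -/
noncomputable def numRejSD (m : ℕ) (τ : ℕ → ℝ) (q : Fin m → ℝ) : ℕ :=
  sSup {k | k ≤ m ∧ ∀ k' ≤ k, k' ≤ (univ.filter (fun j => q j ≤ τ k')).card}

/-- Rejection set of the step-down procedure. -/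
noncomputable def rejSD (m : ℕ) (τ : ℕ → ℝ) (q : Fin m → ℝ) : Finset (Fin m) :=
  univ.filter (fun i => q i ≤ τ (numRejSD m τ q))

open Function

namespace StepDown

variable {m : ℕ} {τ : ℕ → ℝ} {q : Fin m → ℝ} {i : Fin m} {k : ℕ}

noncomputable def numBelow (τ : ℕ → ℝ) (q : Fin m → ℝ) (k : ℕ) : ℕ := #{j | q j ≤ τ k}

def IsSDAdmissible (τ : ℕ → ℝ) (q : Fin m → ℝ) (k : ℕ) : Prop :=
  k ≤ m ∧ ∀ k' ≤ k, k' ≤ numBelow τ q k'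

lemma bddAbove_isSDAdmissible : BddAbove {k | IsSDAdmissible τ q k} := ⟨m, fun _ hk => hk.1⟩

lemma isSDAdmissible_numRejSD : IsSDAdmissible τ q (numRejSD m τ q) :=
  Nat.sSup_mem ⟨0, (⟨Nat.zero_le m, fun k' hk' => by omega⟩ : IsSDAdmissible τ q 0)⟩
    bddAbove_isSDAdmissible

lemma le_numRejSD (h : IsSDAdmissible τ q k) : k ≤ numRejSD m τ q :=
  le_csSup bddAbove_isSDAdmissible h

lemma numRejSD_le : numRejSD m τ q ≤ m := isSDAdmissible_numRejSD.1

lemma le_numBelow_of_le_numRejSD (hk : k ≤ numRejSD m τ q) : k ≤ numBelow τ q k :=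
  isSDAdmissible_numRejSD.2 k hk

lemma numBelow_succ_numRejSD_lt (h : numRejSD m τ q < m) :
    numBelow τ q (numRejSD m τ q + 1) < numRejSD m τ q + 1 := by
  by_contra! hc
  have : numRejSD m τ q + 1 ≤ numRejSD m τ q := by
    refine le_numRejSD ⟨h, fun k' hk' => ?_⟩
    rcases Nat.lt_or_eq_of_le hk' with hk' | rfl
    · exact le_numBelow_of_le_numRejSD (Nat.le_of_lt_succ hk')
    · exact hc
  omega

lemma numRejSD_eq_iff {a : ℕ} :
    numRejSD m τ q = a ↔ IsSDAdmissible τ q a ∧ ¬ IsSDAdmissible τ q (a + 1) := by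
  refine ⟨?_, fun ⟨ha, ha'⟩ => le_antisymm ?_ (le_numRejSD ha)⟩
  · rintro rfl
    exact ⟨isSDAdmissible_numRejSD, fun h => by simpa using le_numRejSD h⟩
  · by_contra! h
    exact ha' ⟨h.trans_le numRejSD_le, fun k' hk' => le_numBelow_of_le_numRejSD (by omega)⟩

lemma numBelow_mono (hτ : ∀ k l, k ≤ l → l ≤ m → τ k ≤ τ l) {l : ℕ} (hkl : k ≤ l) (hl : l ≤ m) :
    numBelow τ q k ≤ numBelow τ q l :=
  card_le_card (monotone_filter_right _ fun _ _ h => h.trans (hτ k l hkl hl))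

lemma numRejSD_le_card_rejSD : numRejSD m τ q ≤ #(rejSD m τ q) :=
  le_numBelow_of_le_numRejSD le_rfl

/-- The `i`-th p-value is replaced by `2`, which exceeds every critical value, so it is never
counted. -/
noncomputable def numRejSDWithout (m : ℕ) (τ : ℕ → ℝ) (q : Fin m → ℝ) (i : Fin m) : ℕ :=
  numRejSD m τ (update q i 2)

section LeaveOneOut

variable (hτ1 : ∀ k ≤ m, τ k ≤ 1)
include hτ1

lemma numBelow_eq_numBelow_update_add (hk : k ≤ m) :
    numBelow τ q k = numBelow τ (update q i 2) k + if q i ≤ τ k then 1 else 0 := by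
  have h2 : ¬ (2 : ℝ) ≤ τ k := by linarith [hτ1 k hk]
  simp only [numBelow, card_filter, ← add_sum_erase _ _ (mem_univ i), update_self, h2,
    if_false, zero_add]
  rw [add_comm]
  congr 1
  exact sum_congr rfl fun j hj => by rw [update_of_ne (ne_of_mem_erase hj)]

lemma numBelow_update_lt (hk : k ≤ m) : numBelow τ (update q i 2) k < m := by
  have h2 : ¬ (2 : ℝ) ≤ τ k := by linarith [hτ1 k hk]
  simpa [numBelow] using card_lt_card (filter_ssubset.2 ⟨i, mem_univ i, by simpa using h2⟩)

lemma numRejSDWithout_lt : numRejSDWithout m τ q i < m := by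
  refine lt_of_le_of_ne numRejSD_le fun h => ?_
  have := le_numBelow_of_le_numRejSD (q := update q i 2) h.ge
  exact (numBelow_update_lt hτ1 le_rfl).not_ge this

lemma numRejSD_eq_numRejSDWithout (h : τ (numRejSDWithout m τ q i + 1) < q i) :
    numRejSD m τ q = numRejSDWithout m τ q i := by
  set A := numRejSDWithout m τ q i
  have hA : A < m := numRejSDWithout_lt hτ1
  refine le_antisymm (not_lt.1 fun hlt => ?_) (le_numRejSD ⟨hA.le, fun k' hk' => ?_⟩)
  · have h1 := le_numBelow_of_le_numRejSD (q := q) hlt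
    have h2 := numBelow_succ_numRejSD_lt (q := update q i 2) hA
    rw [numBelow_eq_numBelow_update_add hτ1 (i := i) hA, if_neg (not_le.2 h)] at h1
    exact h2.not_ge h1
  · have := numBelow_eq_numBelow_update_add hτ1 (q := q) (i := i) (hk'.trans hA.le)
    have := le_numBelow_of_le_numRejSD (q := update q i 2) hk'
    omega

variable (hτmono : ∀ k l, k ≤ l → l ≤ m → τ k ≤ τ l)
include hτmono

lemma numRejSDWithout_lt_numRejSD (h : q i ≤ τ (numRejSD m τ q)) :
    numRejSDWithout m τ q i < numRejSD m τ q := by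
  by_contra! hle
  have hN : numRejSD m τ q < m := hle.trans_lt (numRejSDWithout_lt hτ1)
  -- Otherwise step `N + 1` would pass: `q i` adds one to a count that is already `≥ N`.
  have hcount := numBelow_eq_numBelow_update_add hτ1 (q := q) (i := i)
    (k := numRejSD m τ q + 1) hN
  rw [if_pos (h.trans (hτmono _ _ (Nat.le_add_right _ 1) hN))] at hcount
  have hmono := numBelow_mono (q := update q i 2) hτmono (Nat.le_add_right _ 1) hN
  have hadm := le_numBelow_of_le_numRejSD (q := update q i 2) hle
  have hstop := numBelow_succ_numRejSD_lt hN
  omega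

lemma le_critical_numRejSDWithout_succ (h : q i ≤ τ (numRejSD m τ q)) :
    q i ≤ τ (numRejSDWithout m τ q i + 1) := by
  by_contra! hlt
  have hA := numRejSDWithout_lt hτ1 (q := q) (i := i)
  rw [numRejSD_eq_numRejSDWithout hτ1 hlt] at h
  exact hlt.not_ge (h.trans (hτmono _ _ (Nat.le_succ _) hA))

lemma sum_accept_weight_le_one :
    ∑ i, (if τ (numRejSDWithout m τ q i + 1) < q i
      then ((m - numRejSDWithout m τ q i : ℕ) : ℝ)⁻¹ else 0) ≤ 1 := by
  -- Every nonzero term has `A_i = N` and `q i > τ (N + 1)`, which fewer than `m - N` p-values do.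
  set N := numRejSD m τ q
  have hterm : ∀ i, (if τ (numRejSDWithout m τ q i + 1) < q i
      then ((m - numRejSDWithout m τ q i : ℕ) : ℝ)⁻¹ else 0)
      ≤ if τ (N + 1) < q i then ((m - N : ℕ) : ℝ)⁻¹ else 0 := fun i => by
    by_cases h : τ (numRejSDWithout m τ q i + 1) < q i
    · have hN : N = numRejSDWithout m τ q i := numRejSD_eq_numRejSDWithout hτ1 h
      rw [if_pos h, hN, if_pos h]
    · rw [if_neg h]
      split_ifs <;> positivity
  refine (sum_le_sum fun i _ => hterm i).trans ?_
  rw [sum_ite, sum_const_zero, add_zero, sum_const, nsmul_eq_mul, ← div_eq_mul_inv]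
  rcases numRejSD_le.lt_or_eq with hN | hN
  · have hsplit : numBelow τ q (N + 1) + #{i | τ (N + 1) < q i} = m := by
      simpa [numBelow, not_le] using card_filter_add_card_filter_not (s := univ)
        (fun i => q i ≤ τ (N + 1))
    have hmono : numBelow τ q N ≤ numBelow τ q (N + 1) :=
      numBelow_mono hτmono (Nat.le_add_right N 1) hN
    have hadm : N ≤ numBelow τ q N := le_numBelow_of_le_numRejSD le_rfl
    refine div_le_one_of_le₀ ?_ (Nat.cast_nonneg _)
    exact_mod_cast (show _ ≤ m - N by omega)
  · simp [N, hN]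

lemma fdp_rejSD_le_sum (H0 : Finset (Fin m)) :
    FDP m H0 (rejSD m τ q) ≤ ∑ i ∈ H0, (if q i ≤ τ (numRejSDWithout m τ q i + 1)
      then ((numRejSDWithout m τ q i + 1 : ℕ) : ℝ)⁻¹ else 0) := by
  have hFDP : FDP m H0 (rejSD m τ q)
      = ∑ i ∈ H0, if i ∈ rejSD m τ q then (max (#(rejSD m τ q) : ℝ) 1)⁻¹ else 0 := by
    rw [FDP, sum_ite_mem, sum_const, nsmul_eq_mul, div_eq_mul_inv, inter_comm]
  rw [hFDP]
  refine sum_le_sum fun i _ => ?_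
  by_cases hR : i ∈ rejSD m τ q
  · have hrej : q i ≤ τ (numRejSD m τ q) := (mem_filter.1 hR).2
    have hA := numRejSDWithout_lt_numRejSD hτ1 hτmono hrej
    have hcard : numRejSDWithout m τ q i + 1 ≤ #(rejSD m τ q) :=
      hA.trans_le numRejSD_le_card_rejSD
    rw [if_pos hR, if_pos (le_critical_numRejSDWithout_succ hτ1 hτmono hrej)]
    refine inv_anti₀ (by positivity) (le_max_of_le_left ?_)
    exact_mod_cast hcard
  · rw [if_neg hR]
    split_ifs <;> positivity

end LeaveOneOut

lemma measurable_numBelow (τ : ℕ → ℝ) (k : ℕ) :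
    Measurable fun q : Fin m → ℝ => numBelow τ q k := by
  simp_rw [numBelow, card_filter]
  exact Finset.measurable_sum _ fun j _ =>
    Measurable.ite (measurableSet_le (measurable_pi_apply j) measurable_const)
      measurable_const measurable_const

lemma measurable_isSDAdmissible (τ : ℕ → ℝ) (k : ℕ) :
    Measurable fun q : Fin m → ℝ => IsSDAdmissible τ q k :=
  measurable_const.and <| Measurable.forall fun k' => Measurable.forall fun _ =>
    measurableSet_setOfPred.1 (measurableSet_le measurable_const (measurable_numBelow τ k'))

lemma measurable_numRejSD (τ : ℕ → ℝ) : Measurable (numRejSD m τ) := by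
  refine measurable_to_countable' fun a => ?_
  have h : numRejSD m τ ⁻¹' {a}
      = {q | IsSDAdmissible τ q a} ∩ {q | IsSDAdmissible τ q (a + 1)}ᶜ := by
    ext q
    exact numRejSD_eq_iff
  rw [h]
  exact (measurableSet_setOfPred.2 (measurable_isSDAdmissible τ a)).inter
    (measurableSet_setOfPred.2 (measurable_isSDAdmissible τ (a + 1))).compl

end StepDown

section Probability

variable {Ω ι β : Type*} [MeasurableSpace Ω] {P : Measure Ω}

lemma ProbabilityTheory.iIndepFun.indepFun_update [Fintype ι] [DecidableEq ι] [MeasurableSpace β]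
    {p : ι → Ω → β} (h : iIndepFun p P)
    (hmeas : ∀ i, Measurable (p i)) (i : ι) (c : β) :
    IndepFun (p i) (fun ω => update (fun j => p j ω) i c) P := by
  have hi := h.indepFun_finset {i} {i}ᶜ disjoint_compl_right hmeas
  let extend : (({i}ᶜ : Finset ι) → β) → ι → β :=
    fun v j => if hj : j = i then c else v ⟨j, by simpa using hj⟩
  have hext : Measurable extend := measurable_pi_lambda _ fun j => by
    by_cases hj : j = i
    · simp only [extend, dif_pos hj, measurable_const]
    · simp only [extend, dif_neg hj]; exact measurable_pi_apply _
  convert hi.comp (measurable_pi_apply ⟨i, mem_singleton_self i⟩) hext using 1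
  · rfl
  funext ω j
  by_cases hj : j = i
  · subst hj; simp [extend]
  · simp [extend, hj]

variable {α γ : Type*} [MeasurableSpace α] [MeasurableSpace γ]

lemma ProbabilityTheory.IndepFun.integral_comp_le [IsProbabilityMeasure P] {X : Ω → α} {Y : Ω → γ}
    (hXY : IndepFun X Y P) (hX : Measurable X) (hY : Measurable Y) {F G : α → γ → ℝ}
    (hF : Integrable (uncurry F) ((P.map X).prod (P.map Y)))
    (hG : Integrable (uncurry G) ((P.map X).prod (P.map Y)))
    (hFG : ∀ᵐ y ∂P.map Y, ∫ x, F x y ∂P.map X ≤ ∫ x, G x y ∂P.map X) :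
    ∫ ω, F (X ω) (Y ω) ∂P ≤ ∫ ω, G (X ω) (Y ω) ∂P := by
  have hmap := (indepFun_iff_map_prod_eq_prod_map_map hX.aemeasurable hY.aemeasurable).1 hXY
  have iterate : ∀ H : α → γ → ℝ, Integrable (uncurry H) ((P.map X).prod (P.map Y)) →
      ∫ ω, H (X ω) (Y ω) ∂P = ∫ y, ∫ x, H x y ∂P.map X ∂P.map Y := fun H hH =>
    calc ∫ ω, H (X ω) (Y ω) ∂P = ∫ z, uncurry H z ∂P.map fun ω => (X ω, Y ω) :=
          (integral_map (hX.prodMk hY).aemeasurable (hmap ▸ hH.aestronglyMeasurable)).symm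
      _ = ∫ y, ∫ x, H x y ∂P.map X ∂P.map Y := by rw [hmap, integral_prod_symm _ hH]; rfl
  rw [iterate F hF, iterate G hG]
  exact integral_mono_ae hF.integral_prod_right hG.integral_prod_right hFG

lemma integrable_uncurry_ite_inv_natCast
    {μ : Measure (α × ℕ)} [IsFiniteMeasure μ] {p : α → ℕ → Prop} [∀ x a, Decidable (p x a)]
    (hp : ∀ a, MeasurableSet {x | p x a}) (c : ℕ → ℕ) :
    Integrable (uncurry fun x a => if p x a then ((c a : ℕ) : ℝ)⁻¹ else 0) μ := by
  refine Integrable.of_bound (Measurable.aestronglyMeasurable ?_) 1 (ae_of_all _ fun z => ?_)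
  · exact measurable_from_prod_countable_left fun a =>
      show Measurable fun x => if p x a then ((c a : ℕ) : ℝ)⁻¹ else 0 from
        Measurable.ite (hp a) measurable_const measurable_const
  simp only [uncurry]
  split_ifs
  · simpa using Nat.cast_inv_le_one (c z.2)
  · simp

lemma mul_inv_le_of_div_mul_div_le {x t k D C : ℝ} (hx : x ≤ t) (ht0 : 0 ≤ t) (ht1 : t < 1)
    (hk : 0 < k) (hD : 0 < D) (hC : D / (1 - t) * (t / k) ≤ C) :
    x * k⁻¹ ≤ C * ((1 - x) * D⁻¹) := by
  have h1t : 0 < 1 - t := by linarith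
  have hC0 : 0 ≤ C := le_trans (by positivity) hC
  calc x * k⁻¹ ≤ t / k := by rw [div_eq_mul_inv]; gcongr
    _ = D / (1 - t) * (t / k) * ((1 - t) / D) := by field_simp
    _ ≤ C * ((1 - t) / D) := by gcongr
    _ ≤ C * ((1 - x) * D⁻¹) := by rw [div_eq_mul_inv]; gcongr

variable [IsProbabilityMeasure P]

lemma integral_rejected_le_mul_integral_accepted {m : ℕ} {X : Ω → ℝ} {Y : Ω → ℕ}
    (hXY : IndepFun X Y P) (hX : Measurable X) (hY : Measurable Y) (hYm : ∀ ω, Y ω < m)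
    (hsu : ∀ t ∈ Set.Icc (0 : ℝ) 1, P {ω | X ω ≤ t} ≤ ENNReal.ofReal t)
    {τ : ℕ → ℝ} (hτ : ∀ k, 1 ≤ k → k ≤ m → τ k ∈ Set.Ico (0 : ℝ) 1) {C : ℝ}
    (hC : ∀ k, 1 ≤ k → k ≤ m → ((m - k + 1 : ℕ) : ℝ) / (1 - τ k) * (τ k / (k : ℝ)) ≤ C) :
    ∫ ω, (if X ω ≤ τ (Y ω + 1) then ((Y ω + 1 : ℕ) : ℝ)⁻¹ else 0) ∂P
      ≤ C * ∫ ω, (if τ (Y ω + 1) < X ω then ((m - Y ω : ℕ) : ℝ)⁻¹ else 0) ∂P := by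
  rw [← integral_const_mul]
  refine hXY.integral_comp_le hX hY
    (F := fun x a => if x ≤ τ (a + 1) then ((a + 1 : ℕ) : ℝ)⁻¹ else 0)
    (G := fun x a => C * if τ (a + 1) < x then ((m - a : ℕ) : ℝ)⁻¹ else 0)
    (integrable_uncurry_ite_inv_natCast (fun a => measurableSet_Iic) _)
    ((integrable_uncurry_ite_inv_natCast (p := fun x a => τ (a + 1) < x)
      (fun a => measurableSet_Ioi) (fun a => m - a)).const_mul C) ?_
  have hYm' : ∀ᵐ a ∂P.map Y, a < m :=
    (ae_map_iff hY.aemeasurable (measurableSet_Iio (a := m))).2 (ae_of_all _ hYm)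
  filter_upwards [hYm'] with a ha
  obtain ⟨ht0, ht1⟩ := hτ (a + 1) (Nat.le_add_left 1 a) ha
  have hsu' : (P.map X).real (Set.Iic (τ (a + 1))) ≤ τ (a + 1) := by
    rw [map_measureReal_apply hX measurableSet_Iic, measureReal_def]
    exact ENNReal.toReal_le_of_le_ofReal ht0 (hsu _ ⟨ht0, ht1.le⟩)
  have := Measure.isProbabilityMeasure_map (μ := P) hX.aemeasurable
  have hcompl : (P.map X).real (Set.Ioi (τ (a + 1)))
      = 1 - (P.map X).real (Set.Iic (τ (a + 1))) := by
    rw [← Set.compl_Iic, probReal_compl_eq_one_sub measurableSet_Iic]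
  have hCa := hC (a + 1) (Nat.le_add_left 1 a) ha
  rw [show m - (a + 1) + 1 = m - a by omega] at hCa
  have hIic : ∫ x, (if x ≤ τ (a + 1) then ((a + 1 : ℕ) : ℝ)⁻¹ else 0) ∂P.map X
      = (P.map X).real (Set.Iic (τ (a + 1))) * ((a + 1 : ℕ) : ℝ)⁻¹ := by
    rw [← smul_eq_mul, ← integral_indicator_const _ measurableSet_Iic]
    simp [Set.indicator_apply]
  have hIoi : ∫ x, (if τ (a + 1) < x then ((m - a : ℕ) : ℝ)⁻¹ else 0) ∂P.map X
      = (P.map X).real (Set.Ioi (τ (a + 1))) * ((m - a : ℕ) : ℝ)⁻¹ := by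
    rw [← smul_eq_mul, ← integral_indicator_const _ measurableSet_Ioi]
    simp [Set.indicator_apply]
  rw [integral_const_mul, hIic, hIoi, hcompl]
  exact mul_inv_le_of_div_mul_div_le hsu' ht0 ht1 (by positivity)
    (Nat.cast_pos.2 (Nat.sub_pos_of_lt ha)) hCa

open StepDown in
theorem integral_fdp_rejSD_le (P : Measure Ω) [IsProbabilityMeasure P] {m : ℕ} (hm : 1 ≤ m)
    {p : Fin m → Ω → ℝ} (hmeas : ∀ i, Measurable (p i)) (hindep : iIndepFun p P)
    (H0 : Finset (Fin m))
    (hnull : ∀ i ∈ H0, ∀ t ∈ Set.Icc (0 : ℝ) 1, P {ω | p i ω ≤ t} ≤ ENNReal.ofReal t)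
    {τ : ℕ → ℝ} (hτmono : ∀ k l, k ≤ l → l ≤ m → τ k ≤ τ l)
    (hτ01 : ∀ k ≤ m, τ k ∈ Set.Icc (0 : ℝ) 1) (hτlt1 : ∀ k, 1 ≤ k → k ≤ m → τ k < 1) {C : ℝ}
    (hC : ∀ k, 1 ≤ k → k ≤ m → ((m - k + 1 : ℕ) : ℝ) / (1 - τ k) * (τ k / (k : ℝ)) ≤ C) :
    ∫ ω, FDP m H0 (rejSD m τ (fun j => p j ω)) ∂P ≤ C := by
  have hτ1 : ∀ k ≤ m, τ k ≤ 1 := fun k hk => (hτ01 k hk).2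
  let A : Fin m → Ω → ℕ := fun i ω => numRejSDWithout m τ (fun j => p j ω) i
  have hA : ∀ i, Measurable (A i) := fun i =>
    (measurable_numRejSD τ).comp (measurable_update_left.comp (measurable_pi_lambda _ hmeas))
  have hindepA : ∀ i, IndepFun (p i) (A i) P := fun i =>
    (hindep.indepFun_update hmeas i 2).comp measurable_id (measurable_numRejSD τ)
  let F : Fin m → Ω → ℝ := fun i ω =>
    if p i ω ≤ τ (A i ω + 1) then ((A i ω + 1 : ℕ) : ℝ)⁻¹ else 0
  let G : Fin m → Ω → ℝ := fun i ω =>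
    if τ (A i ω + 1) < p i ω then ((m - A i ω : ℕ) : ℝ)⁻¹ else 0
  have hF : ∀ i, Integrable (F i) P := fun i =>
    (integrable_uncurry_ite_inv_natCast (μ := P.map fun ω => (p i ω, A i ω))
      (p := fun x a => x ≤ τ (a + 1)) (fun a => measurableSet_Iic)
      (fun a => a + 1)).comp_measurable ((hmeas i).prodMk (hA i))
  have hG : ∀ i, Integrable (G i) P := fun i =>
    (integrable_uncurry_ite_inv_natCast (μ := P.map fun ω => (p i ω, A i ω))
      (p := fun x a => τ (a + 1) < x) (fun a => measurableSet_Ioi)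
      (fun a => m - a)).comp_measurable ((hmeas i).prodMk (hA i))
  have hC0 : 0 ≤ C := le_trans (mul_nonneg
    (div_nonneg (Nat.cast_nonneg _) (sub_pos.2 (hτlt1 1 le_rfl hm)).le)
    (div_nonneg (hτ01 1 hm).1 (Nat.cast_nonneg _))) (hC 1 le_rfl hm)
  calc ∫ ω, FDP m H0 (rejSD m τ (fun j => p j ω)) ∂P
      ≤ ∫ ω, ∑ i ∈ H0, F i ω ∂P :=
        integral_mono_of_nonneg (ae_of_all _ fun ω => by unfold FDP; positivity)
          (integrable_finsetSum _ fun i _ => hF i)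
          (ae_of_all _ fun ω => fdp_rejSD_le_sum hτ1 hτmono H0)
    _ = ∑ i ∈ H0, ∫ ω, F i ω ∂P := integral_finsetSum _ fun i _ => hF i
    _ ≤ ∑ i ∈ H0, C * ∫ ω, G i ω ∂P := sum_le_sum fun i hi =>
        integral_rejected_le_mul_integral_accepted (hindepA i) (hmeas i) (hA i)
          (fun ω => numRejSDWithout_lt hτ1) (hnull i hi)
          (fun k hk1 hk => ⟨(hτ01 k hk).1, hτlt1 k hk1 hk⟩) hC
    _ ≤ C * ∑ i, ∫ ω, G i ω ∂P := by
        rw [← mul_sum]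
        gcongr
        exact subset_univ H0
    _ = C * ∫ ω, ∑ i, G i ω ∂P := by rw [integral_finsetSum _ fun i _ => hG i]
    _ ≤ C * 1 := by
        gcongr
        refine (integral_mono_of_nonneg (ae_of_all _ fun ω => by positivity)
          (integrable_const 1) (ae_of_all _ fun ω => sum_accept_weight_le_one hτ1 hτmono)).trans ?_
        simp
    _ = C := mul_one C

end Probability

noncomputable def gbsCriticalValue (m : ℕ) (α : ℝ) (k : ℕ) : ℝ :=
  α * k / ((m : ℝ) - (1 - α) * k + 1)

section GBS

variable {m k l : ℕ} {α : ℝ}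

lemma gbsCriticalValue_denom_pos (hα : 0 ≤ α) (hk : k ≤ m) : 0 < (m : ℝ) - (1 - α) * k + 1 := by
  have : (k : ℝ) ≤ m := by exact_mod_cast hk
  nlinarith

lemma gbsCriticalValue_mono (hα : 0 ≤ α) (hkl : k ≤ l) (hl : l ≤ m) :
    gbsCriticalValue m α k ≤ gbsCriticalValue m α l := by
  have hk' : (k : ℝ) ≤ l := by exact_mod_cast hkl
  rw [gbsCriticalValue, gbsCriticalValue, div_le_div_iff₀
    (gbsCriticalValue_denom_pos hα (hkl.trans hl)) (gbsCriticalValue_denom_pos hα hl)]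
  nlinarith [mul_nonneg hα (sub_nonneg.2 hk'), (Nat.cast_nonneg m : (0 : ℝ) ≤ m)]

lemma gbsCriticalValue_nonneg (hα : 0 ≤ α) (hk : k ≤ m) : 0 ≤ gbsCriticalValue m α k :=
  div_nonneg (by positivity) (gbsCriticalValue_denom_pos hα hk).le

lemma gbsCriticalValue_lt_one (hα : 0 ≤ α) (hk : k ≤ m) : gbsCriticalValue m α k < 1 := by
  have : (k : ℝ) ≤ m := by exact_mod_cast hk
  rw [gbsCriticalValue, div_lt_one (gbsCriticalValue_denom_pos hα hk)]
  linarith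

lemma gbsCriticalValue_ratio (hα : 0 ≤ α) (hk1 : 1 ≤ k) (hk : k ≤ m) :
    ((m - k + 1 : ℕ) : ℝ) / (1 - gbsCriticalValue m α k) * (gbsCriticalValue m α k / k) = α := by
  have hd := gbsCriticalValue_denom_pos hα hk
  have hmk : (0 : ℝ) < m - k + 1 := by
    have : (k : ℝ) ≤ m := by exact_mod_cast hk
    linarith
  have h1 : 1 - gbsCriticalValue m α k = (m - k + 1) / ((m : ℝ) - (1 - α) * k + 1) := by
    rw [gbsCriticalValue, eq_div_iff hd.ne', sub_mul, div_mul_cancel₀ _ hd.ne']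
    ring
  rw [Nat.cast_add, Nat.cast_sub hk, Nat.cast_one, h1, div_div_cancel₀ hmk.ne', gbsCriticalValue]
  set d := (m : ℝ) - (1 - α) * k + 1
  field_simp

end GBS

theorem fdr_sd_superuniform_adaptive_bound_and_GBS_general
    {Ω : Type*} [MeasurableSpace Ω] (P : Measure Ω) [IsProbabilityMeasure P]
    (m : ℕ) (hm : 1 ≤ m)
    (p : Fin m → Ω → ℝ) (hmeas : ∀ i, Measurable (p i))
    (hindep : iIndepFun p P)
    (H0 : Finset (Fin m))
    (hnull : ∀ i ∈ H0, ∀ t ∈ Set.Icc (0 : ℝ) 1,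
      P {ω | p i ω ≤ t} ≤ ENNReal.ofReal t)
    (τ : ℕ → ℝ)
    (hτmono : ∀ k l, k ≤ l → l ≤ m → τ k ≤ τ l)
    (hτ01 : ∀ k ≤ m, τ k ∈ Set.Icc (0 : ℝ) 1)
    (hτlt1 : ∀ k, 1 ≤ k → k ≤ m → τ k < 1)
    (α : ℝ) (hα : α ∈ Set.Ioo (0 : ℝ) 1) :
    (∫ ω, FDP m H0 (rejSD m τ (fun j => p j ω)) ∂P
      ≤ (Finset.Icc 1 m).sup' (Finset.nonempty_Icc.mpr hm)
          (fun k => ((m - k + 1 : ℕ) : ℝ) / (1 - τ k) * (τ k / (k : ℝ))))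
    ∧ (∫ ω, FDP m H0
          (rejSD m (fun k => α * k / ((m : ℝ) - (1 - α) * k + 1)) (fun j => p j ω)) ∂P
        ≤ α) := by
  have hα0 : 0 ≤ α := hα.1.le
  refine ⟨integral_fdp_rejSD_le P hm hmeas hindep H0 hnull hτmono hτ01 hτlt1
    fun k hk1 hk => le_sup' (fun k => ((m - k + 1 : ℕ) : ℝ) / (1 - τ k) * (τ k / (k : ℝ)))
      (mem_Icc.2 ⟨hk1, hk⟩), ?_⟩
  exact integral_fdp_rejSD_le (τ := gbsCriticalValue m α) P hm hmeas hindep H0 hnull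
    (fun k l hkl hl => gbsCriticalValue_mono hα0 hkl hl)
    (fun k hk => ⟨gbsCriticalValue_nonneg hα0 hk, (gbsCriticalValue_lt_one hα0 hk).le⟩)
    (fun k _ hk => gbsCriticalValue_lt_one hα0 hk)
    (fun k hk1 hk => (gbsCriticalValue_ratio hα0 hk1 hk).le)

/-- under super-uniform null p-values and `τ_k < 1` for all `k`,
`FDR(SD(τ)) ≤ max_{1 ≤ k ≤ m} ((m-k+1)/(1-τ_k)) · (τ_k/k)`; in particular the
Gavrilov-Benjamini-Sarkar step-down procedure `τ_k = αk/(m-(1-α)k+1)` has `FDR ≤ α`. -/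
theorem fdr_sd_superuniform_adaptive_bound_and_GBS
    {Ω : Type*} [MeasurableSpace Ω] (P : Measure Ω) [IsProbabilityMeasure P]
    (m : ℕ) (hm : 1 ≤ m)
    (p : Fin m → Ω → ℝ) (hmeas : ∀ i, Measurable (p i))
    (hp01 : ∀ i ω, p i ω ∈ Set.Icc (0 : ℝ) 1)
    (hindep : iIndepFun p P)
    (H0 : Finset (Fin m))
    (hnull : ∀ i ∈ H0, ∀ t ∈ Set.Icc (0 : ℝ) 1,
      P {ω | p i ω ≤ t} ≤ ENNReal.ofReal t)
    (τ : ℕ → ℝ) (hτ0 : τ 0 = 0)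
    (hτmono : ∀ k l, k ≤ l → l ≤ m → τ k ≤ τ l)
    (hτ01 : ∀ k ≤ m, τ k ∈ Set.Icc (0 : ℝ) 1)
    (hτlt1 : ∀ k, 1 ≤ k → k ≤ m → τ k < 1)
    (α : ℝ) (hα : α ∈ Set.Ioo (0 : ℝ) 1) :
    (∫ ω, FDP m H0 (rejSD m τ (fun j => p j ω)) ∂P
      ≤ (Finset.Icc 1 m).sup' (Finset.nonempty_Icc.mpr hm)
          (fun k => ((m - k + 1 : ℕ) : ℝ) / (1 - τ k) * (τ k / (k : ℝ))))
    ∧ (∫ ω, FDP m H0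
          (rejSD m (fun k => α * k / ((m : ℝ) - (1 - α) * k + 1)) (fun j => p j ω)) ∂P
        ≤ α) :=
  fdr_sd_superuniform_adaptive_bound_and_GBS_general P m hm p hmeas hindep H0 hnull τ hτmono hτ01
    hτlt1 α hα
end

section
/- For any nondecreasing sequence of critical values τ = (τ_1, …, τ_m) ∈ [0,1]^m such that F_i(τ_k) < 1 for all i and all k, the false discovery rate of the step-down procedure SD(τ) satisfies FDR(SD(τ)) ≤ max_{1 ≤ k ≤ m} (1/k) · Σ_{i=1}^m F_i(τ_k)/(1 − F_i(τ_k)). -/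
open MeasureTheory ProbabilityTheory Finset

/-!
For a hypothesis `i`, let `a_i` and `b_i` (`sdIndexErase`, `sdIndexInsert`) be the numbers of
step-down rejections when `p_i` is moved above, respectively below, every critical value, and
`c_i = min (a_i + 1) b_i` (`sdCritIndex`). Both depend only on `(p_j)_{j ≠ i}`; the hypothesis
`i` is rejected iff `p_i ≤ τ_{c_i}`, and then exactly `b_i` hypotheses are rejected. Hence
`FDP ≤ ∑_{i ∈ H₀} 1{p_i ≤ τ_{c_i}} / b_i`. Conditioning on `(b_i, c_i)`, which is independent of
`p_i`, the bound `P(p_i ≤ t) ≤ F_i(t) < 1` turns the `i`-th term into at most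
`E[1{p_i > τ_{c_i}} g_i(c_i) / b_i]` with `g_i = F_i / (1 - F_i)`. Finally, if `K < m` hypotheses
are rejected, every accepted one has `c_i = K + 1 ≤ b_i`, so these terms add up to at most
`(K + 1)⁻¹ ∑_i g_i(K + 1)`.
-/

noncomputable def sdIndex (m : ℕ) (N : ℕ → ℕ) : ℕ :=
  sSup {k | k ≤ m ∧ ∀ k' ≤ k, k' ≤ N k'}

section sdIndex

variable {m k : ℕ} {N N' : ℕ → ℕ}

lemma sdIndex_mem : sdIndex m N ∈ {k | k ≤ m ∧ ∀ k' ≤ k, k' ≤ N k'} :=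
  Nat.sSup_mem ⟨0, by simp⟩ ⟨m, fun _ hk => hk.1⟩

lemma sdIndex_le : sdIndex m N ≤ m := sdIndex_mem.1

lemma le_apply_of_le_sdIndex (hk : k ≤ sdIndex m N) : k ≤ N k := sdIndex_mem.2 k hk

lemma le_sdIndex (hk : k ≤ m) (h : ∀ k' ≤ k, k' ≤ N k') : k ≤ sdIndex m N :=
  le_csSup ⟨m, fun _ hk => hk.1⟩ ⟨hk, h⟩

lemma sdIndex_mono (h : ∀ k ≤ m, N k ≤ N' k) : sdIndex m N ≤ sdIndex m N' :=
  le_sdIndex sdIndex_le fun _ hk =>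
    (le_apply_of_le_sdIndex hk).trans (h _ (hk.trans sdIndex_le))

lemma sdIndex_congr (h : ∀ k ≤ m, N k = N' k) : sdIndex m N = sdIndex m N' :=
  (sdIndex_mono fun k hk => (h k hk).le).antisymm (sdIndex_mono fun k hk => (h k hk).ge)

lemma measurable_sdIndex : Measurable (sdIndex m) := by
  have : sdIndex m = (fun v : Fin (m + 1) → ℕ => sdIndex m fun k => v (Fin.ofNat (m + 1) k)) ∘
      fun N (k : Fin (m + 1)) => N k := by
    funext N
    exact sdIndex_congr fun k hk => by simp [Nat.mod_eq_of_lt (Nat.lt_succ_of_le hk)]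
  rw [this]
  exact Measurable.of_discrete.comp (measurable_pi_lambda _ fun k => measurable_pi_apply _)

end sdIndex

section StepDown

variable {m : ℕ} {τ : ℕ → ℝ} {q : Fin m → ℝ} {i : Fin m} {k l : ℕ}

noncomputable def countLE (τ : ℕ → ℝ) (q : Fin m → ℝ) (k : ℕ) : ℕ := #{j | q j ≤ τ k}

noncomputable def countOthers (τ : ℕ → ℝ) (q : Fin m → ℝ) (i : Fin m) (k : ℕ) : ℕ :=
  #{j ∈ univ.erase i | q j ≤ τ k}

lemma numRejSD_eq_sdIndex : numRejSD m τ q = sdIndex m (countLE τ q) := rfl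

lemma numRejSD_le : numRejSD m τ q ≤ m := sdIndex_le

lemma le_countLE_of_le_numRejSD (hk : k ≤ numRejSD m τ q) : k ≤ countLE τ q k :=
  le_apply_of_le_sdIndex hk

lemma card_rejSD : #(rejSD m τ q) = countLE τ q (numRejSD m τ q) := rfl

lemma mem_rejSD : i ∈ rejSD m τ q ↔ q i ≤ τ (numRejSD m τ q) := by simp [rejSD]

lemma countLE_eq_countOthers_add :
    countLE τ q k = countOthers τ q i k + if q i ≤ τ k then 1 else 0 := by
  rw [countLE, countOthers, filter_erase]
  split_ifs with h
  · have : 0 < #{j | q j ≤ τ k} := card_pos.2 ⟨i, by simp [h]⟩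
    rw [card_erase_of_mem (by simp [h])]
    omega
  · rw [erase_eq_of_notMem (by simp [h]), add_zero]

lemma countOthers_mono (hτ : MonotoneOn τ (Set.Iic m)) (hkl : k ≤ l) (hl : l ≤ m) :
    countOthers τ q i k ≤ countOthers τ q i l :=
  card_le_card fun j hj => by
    rw [mem_filter] at hj ⊢
    exact ⟨hj.1, hj.2.trans (hτ (Set.mem_Iic.2 (hkl.trans hl)) (Set.mem_Iic.2 hl) hkl)⟩

lemma countOthers_congr {q' : Fin m → ℝ} (h : ∀ j ≠ i, q j = q' j) :
    countOthers τ q i = countOthers τ q' i := by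
  funext k
  exact congrArg card <| filter_congr fun j hj => by rw [h j (ne_of_mem_erase hj)]

lemma measurable_countOthers : Measurable fun q : Fin m → ℝ => countOthers τ q i := by
  refine measurable_pi_lambda _ fun k => ?_
  simp only [countOthers, card_filter]
  exact Finset.measurable_sum _ fun j _ =>
    Measurable.ite (measurableSet_le (measurable_pi_apply j) measurable_const)
      measurable_const measurable_const

noncomputable def sdIndexErase (τ : ℕ → ℝ) (q : Fin m → ℝ) (i : Fin m) : ℕ :=
  sdIndex m (countOthers τ q i)

noncomputable def sdIndexInsert (τ : ℕ → ℝ) (q : Fin m → ℝ) (i : Fin m) : ℕ :=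
  sdIndex m fun k => countOthers τ q i k + 1

noncomputable def sdCritIndex (τ : ℕ → ℝ) (q : Fin m → ℝ) (i : Fin m) : ℕ :=
  min (sdIndexErase τ q i + 1) (sdIndexInsert τ q i)

lemma one_le_sdIndexInsert (hm : 1 ≤ m) : 1 ≤ sdIndexInsert τ q i :=
  le_sdIndex hm fun _ hk => by omega

lemma sdCritIndex_mem_Icc (hm : 1 ≤ m) : sdCritIndex τ q i ∈ Icc 1 m :=
  mem_Icc.2 ⟨le_min (by omega) (one_le_sdIndexInsert hm), (min_le_right _ _).trans sdIndex_le⟩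

lemma sdIndexErase_le_numRejSD : sdIndexErase τ q i ≤ numRejSD m τ q :=
  numRejSD_eq_sdIndex ▸ sdIndex_mono fun k _ => by rw [countLE_eq_countOthers_add (i := i)]; omega

lemma numRejSD_le_sdIndexInsert : numRejSD m τ q ≤ sdIndexInsert τ q i :=
  numRejSD_eq_sdIndex ▸ sdIndex_mono fun k _ => by
    rw [countLE_eq_countOthers_add (i := i)]; split <;> omega

lemma sdIndexInsert_le_numRejSD (hτ : MonotoneOn τ (Set.Iic m))
    (h : q i ≤ τ (sdCritIndex τ q i)) : sdIndexInsert τ q i ≤ numRejSD m τ q := by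
  refine le_sdIndex sdIndex_le fun k hk => show k ≤ countLE τ q k from ?_
  have hkm : k ≤ m := hk.trans sdIndex_le
  have hk' : k ≤ countOthers τ q i k + 1 := le_apply_of_le_sdIndex hk
  rw [countLE_eq_countOthers_add (i := i)]
  by_cases hka : k ≤ sdIndexErase τ q i
  · have : k ≤ countOthers τ q i k := le_apply_of_le_sdIndex hka
    omega
  · have hck : sdCritIndex τ q i ≤ k := (min_le_left _ _).trans (by omega)
    rw [if_pos (h.trans (hτ (Set.mem_Iic.2 (hck.trans hkm)) (Set.mem_Iic.2 hkm) hck))]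
    exact hk'

lemma mem_rejSD_iff (hτ : MonotoneOn τ (Set.Iic m)) :
    i ∈ rejSD m τ q ↔ q i ≤ τ (sdCritIndex τ q i) := by
  set a := sdIndexErase τ q i
  set K := numRejSD m τ q
  have hKb : K ≤ sdIndexInsert τ q i := numRejSD_le_sdIndexInsert
  have hbm : sdIndexInsert τ q i ≤ m := sdIndex_le
  rw [mem_rejSD]
  refine ⟨fun h => ?_, fun h => ?_⟩
  · rcases le_total (sdIndexInsert τ q i) (a + 1) with hba | hab
    · rw [sdCritIndex, min_eq_right hba]
      exact h.trans (hτ (Set.mem_Iic.2 sdIndex_le) (Set.mem_Iic.2 hbm) hKb)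
    rw [sdCritIndex, min_eq_left hab]
    by_contra hq
    have haK : a + 1 ≤ K := by
      by_contra! hKa
      exact hq (h.trans (hτ (Set.mem_Iic.2 sdIndex_le) (Set.mem_Iic.2 (hab.trans hbm)) hKa.le))
    have hC : a + 1 ≤ countLE τ q (a + 1) := le_countLE_of_le_numRejSD haK
    rw [countLE_eq_countOthers_add (i := i), if_neg hq, add_zero] at hC
    have : a + 1 ≤ a := le_sdIndex (haK.trans sdIndex_le) fun k hk => by
      rcases Nat.lt_or_ge k (a + 1) with hka | hka
      · exact le_apply_of_le_sdIndex (Nat.le_of_lt_succ hka)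
      · rwa [le_antisymm hk hka]
    omega
  · have hbK := sdIndexInsert_le_numRejSD hτ h
    have hcK : sdCritIndex τ q i ≤ K := (min_le_right _ _).trans hbK
    exact h.trans (hτ (Set.mem_Iic.2 (hcK.trans sdIndex_le)) (Set.mem_Iic.2 sdIndex_le) hcK)

lemma numRejSD_eq_sdIndexInsert (hτ : MonotoneOn τ (Set.Iic m)) (hi : i ∈ rejSD m τ q) :
    numRejSD m τ q = sdIndexInsert τ q i :=
  numRejSD_le_sdIndexInsert.antisymm (sdIndexInsert_le_numRejSD hτ ((mem_rejSD_iff hτ).1 hi))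

lemma numRejSD_lt_of_notMem (hi : i ∉ rejSD m τ q) : numRejSD m τ q < m := by
  refine numRejSD_le.lt_of_ne fun hK => hi ?_
  have hC := le_countLE_of_le_numRejSD (le_refl (numRejSD m τ q))
  rw [← card_rejSD, hK] at hC
  have : rejSD m τ q = univ :=
    eq_univ_of_card _ ((card_le_univ _).antisymm (by simpa using hC))
  exact this ▸ mem_univ i

lemma sdCritIndex_eq_of_notMem (hτ : MonotoneOn τ (Set.Iic m)) (hi : i ∉ rejSD m τ q) :
    sdCritIndex τ q i = numRejSD m τ q + 1 ∧ numRejSD m τ q + 1 ≤ sdIndexInsert τ q i := by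
  set K := numRejSD m τ q
  have hKm : K < m := numRejSD_lt_of_notMem hi
  have hC : ∀ k ≤ K, countLE τ q k = countOthers τ q i k := fun k hk => by
    rw [countLE_eq_countOthers_add (i := i), if_neg, add_zero]
    exact fun h => hi (mem_rejSD.2
      (h.trans (hτ (Set.mem_Iic.2 (hk.trans hKm.le)) (Set.mem_Iic.2 hKm.le) hk)))
  have haK : sdIndexErase τ q i = K :=
    sdIndexErase_le_numRejSD.antisymm <| le_sdIndex hKm.le fun k hk =>
      hC k hk ▸ le_countLE_of_le_numRejSD hk
  have hKb : K + 1 ≤ sdIndexInsert τ q i := le_sdIndex hKm fun k hk => by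
    rcases Nat.lt_or_ge k (K + 1) with hkK | hkK
    · have := hC k (Nat.le_of_lt_succ hkK) ▸ le_countLE_of_le_numRejSD (Nat.le_of_lt_succ hkK)
      omega
    · obtain rfl : k = K + 1 := by omega
      have hK : K ≤ countOthers τ q i K := hC K le_rfl ▸ le_countLE_of_le_numRejSD le_rfl
      have := countOthers_mono (q := q) (i := i) hτ (Nat.le_add_right K 1) hKm
      omega
  exact ⟨by rw [sdCritIndex, haK, min_eq_left hKb], hKb⟩

noncomputable def rejWeight (τ : ℕ → ℝ) (q : Fin m → ℝ) (i : Fin m) : ℝ :=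
  (Set.Iic (τ (sdCritIndex τ q i))).indicator (fun _ => (sdIndexInsert τ q i : ℝ)⁻¹) (q i)

noncomputable def accWeight (τ : ℕ → ℝ) (g : ℕ → ℝ) (q : Fin m → ℝ) (i : Fin m) : ℝ :=
  (Set.Ioi (τ (sdCritIndex τ q i))).indicator
    (fun _ => g (sdCritIndex τ q i) / sdIndexInsert τ q i) (q i)

lemma FDP_nonneg (H0 R : Finset (Fin m)) : 0 ≤ FDP m H0 R := by unfold FDP; positivity

lemma FDP_rejSD_le (hm : 1 ≤ m) (hτ : MonotoneOn τ (Set.Iic m)) (H0 : Finset (Fin m)) :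
    FDP m H0 (rejSD m τ q) ≤ ∑ i ∈ H0, rejWeight τ q i := by
  set R := rejSD m τ q
  have hbR : ∀ i ∈ R, (sdIndexInsert τ q i : ℝ) ≤ max (#R : ℝ) 1 := fun i hi => by
    rw [← numRejSD_eq_sdIndexInsert hτ hi]
    exact le_max_of_le_left (mod_cast le_countLE_of_le_numRejSD le_rfl)
  calc FDP m H0 R = ∑ i ∈ H0 ∩ R, (max (#R : ℝ) 1)⁻¹ := by
        rw [FDP, inter_comm, sum_const, nsmul_eq_mul, div_eq_mul_inv]
    _ ≤ ∑ i ∈ H0 ∩ R, (sdIndexInsert τ q i : ℝ)⁻¹ := sum_le_sum fun i hi =>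
        inv_anti₀ (mod_cast one_le_sdIndexInsert hm) (hbR i (mem_inter.1 hi).2)
    _ = _ := by
        rw [← sum_ite_mem]
        refine sum_congr rfl fun i _ => ?_
        simp [rejWeight, Set.indicator_apply, R, mem_rejSD_iff hτ]

lemma sum_accWeight_le_sup' (hm : 1 ≤ m) (hτ : MonotoneOn τ (Set.Iic m)) (s : Finset (Fin m))
    (g : Fin m → ℕ → ℝ) (hg : ∀ i, ∀ k ∈ Icc 1 m, 0 ≤ g i k) :
    ∑ i ∈ s, accWeight τ (g i) q i ≤
      (Icc 1 m).sup' (nonempty_Icc.2 hm) fun k => 1 / (k : ℝ) * ∑ i, g i k := by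
  set K := numRejSD m τ q
  by_cases hK : K < m
  · have hK1 : K + 1 ∈ Icc 1 m := mem_Icc.2 ⟨by omega, hK⟩
    calc _ ≤ ∑ i ∈ s, g i (K + 1) / (K + 1 : ℕ) := sum_le_sum fun i _ => by
          refine Set.indicator_apply_le' (fun hq => ?_) fun _ =>
            div_nonneg (hg i _ hK1) (by positivity)
          have hi : i ∉ rejSD m τ q := fun hi => (not_le.2 hq) ((mem_rejSD_iff hτ).1 hi)
          obtain ⟨hc, hb⟩ := sdCritIndex_eq_of_notMem hτ hi
          rw [hc]
          exact div_le_div_of_nonneg_left (hg i _ hK1) (by positivity) (mod_cast hb)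
      _ ≤ ∑ i, g i (K + 1) / (K + 1 : ℕ) :=
          sum_le_sum_of_subset_of_nonneg (subset_univ s) fun i _ _ =>
            div_nonneg (hg i _ hK1) (by positivity)
      _ = 1 / ((K + 1 : ℕ) : ℝ) * ∑ i, g i (K + 1) := by rw [← sum_div, one_div_mul_eq_div]
      _ ≤ _ := le_sup' (fun k : ℕ => 1 / (k : ℝ) * ∑ i, g i k) hK1
  · have h1 : 1 ∈ Icc 1 m := mem_Icc.2 ⟨le_rfl, hm⟩
    refine (sum_eq_zero fun i _ => Set.indicator_of_notMem (fun hq => not_le.2 hq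
      ((mem_rejSD_iff hτ).1 (not_not.1 (mt numRejSD_lt_of_notMem hK)))) _).trans_le ?_
    exact (le_sup' (fun k : ℕ => 1 / (k : ℝ) * ∑ i, g i k) h1).trans' <|
      mul_nonneg (by simp) (sum_nonneg fun i _ => hg i 1 h1)

noncomputable def sdIndexPair (τ : ℕ → ℝ) (q : Fin m → ℝ) (i : Fin m) : ℕ × ℕ :=
  (sdIndexInsert τ q i, sdCritIndex τ q i)

lemma sdIndexPair_mem (hm : 1 ≤ m) : sdIndexPair τ q i ∈ Icc 1 m ×ˢ Icc 1 m :=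
  mem_product.2 ⟨mem_Icc.2 ⟨one_le_sdIndexInsert hm, sdIndex_le⟩, sdCritIndex_mem_Icc hm⟩

lemma sdIndexPair_congr {q' : Fin m → ℝ} (h : ∀ j ≠ i, q j = q' j) :
    sdIndexPair τ q i = sdIndexPair τ q' i := by
  simp only [sdIndexPair, sdCritIndex, sdIndexErase, sdIndexInsert, countOthers_congr h]

lemma measurable_sdIndexPair : Measurable fun q : Fin m → ℝ => sdIndexPair τ q i := by
  have hN := measurable_countOthers (τ := τ) (i := i)
  have hb : Measurable fun q : Fin m → ℝ => sdIndexInsert τ q i :=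
    measurable_sdIndex.comp <| measurable_pi_lambda _ fun k =>
      ((measurable_pi_apply k).comp hN).add_const 1
  exact hb.prodMk (((measurable_sdIndex.comp hN).add_const 1).min hb)

end StepDown

section Conditioning

variable {Ω α β : Type*} {X : Ω → β} {Z : Ω → α} {D : Finset α}

lemma indicator_comp_eq_sum (hD : ∀ ω, Z ω ∈ D) (s : α → Set β) (u : α → ℝ)
    (ω : Ω) : (s (Z ω)).indicator (fun _ => u (Z ω)) (X ω) =
      ∑ z ∈ D, (X ⁻¹' s z ∩ Z ⁻¹' {z}).indicator (fun _ => u z) ω := by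
  rw [sum_eq_single_of_mem (Z ω) (hD ω) fun z _ hz =>
    Set.indicator_of_notMem (fun h => hz h.2.symm) _]
  by_cases h : X ω ∈ s (Z ω) <;> simp [h]

variable [MeasurableSpace Ω] [MeasurableSpace α] [MeasurableSpace β] [MeasurableSingletonClass α]
  {P : Measure Ω} [IsFiniteMeasure P]

lemma integrable_indicator_comp (hX : Measurable X) (hZ : Measurable Z) (hD : ∀ ω, Z ω ∈ D)
    {s : α → Set β} (hs : ∀ z, MeasurableSet (s z)) (u : α → ℝ) :
    Integrable (fun ω => (s (Z ω)).indicator (fun _ => u (Z ω)) (X ω)) P := by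
  classical
  simp_rw [indicator_comp_eq_sum hD]
  exact integrable_finsetSum _ fun z _ =>
    (integrable_const _).indicator ((hX (hs z)).inter (hZ (measurableSet_singleton z)))

lemma integral_indicator_comp_eq_sum_of_indepFun (hX : Measurable X) (hZ : Measurable Z)
    (hXZ : IndepFun X Z P) (hD : ∀ ω, Z ω ∈ D) {s : α → Set β} (hs : ∀ z, MeasurableSet (s z))
    (u : α → ℝ) :
    ∫ ω, (s (Z ω)).indicator (fun _ => u (Z ω)) (X ω) ∂P =
      ∑ z ∈ D, P.real (X ⁻¹' s z) * P.real (Z ⁻¹' {z}) * u z := by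
  classical
  simp_rw [indicator_comp_eq_sum hD]
  have hmeas z := (hX (hs z)).inter (hZ (measurableSet_singleton z))
  rw [integral_finsetSum _ fun z _ => (integrable_const _).indicator (hmeas z)]
  refine sum_congr rfl fun z _ => ?_
  rw [integral_indicator_const _ (hmeas z), smul_eq_mul, measureReal_def, measureReal_def,
    measureReal_def, hXZ.measure_inter_preimage_eq_mul _ _ (hs z) (measurableSet_singleton z),
    ENNReal.toReal_mul]

lemma integral_indicator_comp_le_of_indepFun (hX : Measurable X) (hZ : Measurable Z)
    (hXZ : IndepFun X Z P) (hD : ∀ ω, Z ω ∈ D) {s s' : α → Set β}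
    (hs : ∀ z, MeasurableSet (s z)) (hs' : ∀ z, MeasurableSet (s' z)) {u v : α → ℝ}
    (h : ∀ z ∈ D, P.real (X ⁻¹' s z) * u z ≤ P.real (X ⁻¹' s' z) * v z) :
    ∫ ω, (s (Z ω)).indicator (fun _ => u (Z ω)) (X ω) ∂P ≤
      ∫ ω, (s' (Z ω)).indicator (fun _ => v (Z ω)) (X ω) ∂P := by
  rw [integral_indicator_comp_eq_sum_of_indepFun hX hZ hXZ hD hs,
    integral_indicator_comp_eq_sum_of_indepFun hX hZ hXZ hD hs']
  refine sum_le_sum fun z hz => ?_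
  have := mul_le_mul_of_nonneg_right (h z hz) (measureReal_nonneg (μ := P) (s := Z ⁻¹' {z}))
  linarith

end Conditioning

lemma ProbabilityTheory.iIndepFun.indepFun_apply_comp_of_forall_ne {Ω ι β γ : Type*}
    [MeasurableSpace Ω] {P : Measure Ω} [Fintype ι] [DecidableEq ι] [MeasurableSpace β]
    [MeasurableSpace γ] [Nonempty β] {X : ι → Ω → β} (h : iIndepFun X P)
    (hX : ∀ j, Measurable (X j)) (i : ι) {G : (ι → β) → γ} (hG : Measurable G)
    (hGi : ∀ x y, (∀ j ≠ i, x j = y j) → G x = G y) :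
    IndepFun (X i) (fun ω => G fun j => X j ω) P := by
  obtain ⟨b⟩ := ‹Nonempty β›
  let E : (↥(univ.erase i) → β) → ι → β := fun v j =>
    if hj : j ∈ univ.erase i then v ⟨j, hj⟩ else b
  have hE : Measurable E := measurable_pi_lambda _ fun j => by
    by_cases hj : j ∈ univ.erase i
    · simp only [E, dif_pos hj]
      exact measurable_pi_apply _
    · simp only [E, dif_neg hj]
      exact measurable_const
  have hGE : (fun ω => G fun j => X j ω) = (G ∘ E) ∘ fun ω (j : ↥(univ.erase i)) => X j ω :=
    funext fun ω => hGi _ _ fun j hj => by simp [E, hj]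
  rw [hGE]
  exact (h.indepFun_finset {i} (univ.erase i) (by simp) hX).comp
    (measurable_pi_apply ⟨i, mem_singleton_self i⟩) (hG.comp hE)

lemma measureReal_Iic_le_measureReal_Ioi_mul {Ω : Type*} [MeasurableSpace Ω] {P : Measure Ω}
    [IsProbabilityMeasure P] {X : Ω → ℝ} (hX : Measurable X) {t a : ℝ}
    (h : P.real (X ⁻¹' Set.Iic t) ≤ a) (ha : a < 1) :
    P.real (X ⁻¹' Set.Iic t) ≤ P.real (X ⁻¹' Set.Ioi t) * (a / (1 - a)) := by
  rw [← Set.compl_Iic, Set.preimage_compl, probReal_compl_eq_one_sub (hX measurableSet_Iic),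
    mul_div_assoc', le_div_iff₀ (by linarith)]
  nlinarith

section Weights

variable {Ω : Type*} [MeasurableSpace Ω] {P : Measure Ω} {m : ℕ} {p : Fin m → Ω → ℝ}
  {τ : ℕ → ℝ} {i : Fin m}

lemma measurable_sdIndexPair_comp (hp : ∀ j, Measurable (p j)) :
    Measurable fun ω => sdIndexPair τ (fun j => p j ω) i :=
  measurable_sdIndexPair.comp (measurable_pi_lambda _ hp)

lemma integral_rejWeight_le_integral_accWeight [IsProbabilityMeasure P] (hm : 1 ≤ m)
    (hp : ∀ j, Measurable (p j)) (hindep : iIndepFun p P) {a : ℕ → ℝ}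
    (ha : ∀ k ∈ Icc 1 m, P.real (p i ⁻¹' Set.Iic (τ k)) ≤ a k) (ha1 : ∀ k ∈ Icc 1 m, a k < 1) :
    ∫ ω, rejWeight τ (fun j => p j ω) i ∂P ≤
      ∫ ω, accWeight τ (fun k => a k / (1 - a k)) (fun j => p j ω) i ∂P :=
  integral_indicator_comp_le_of_indepFun (s := fun z => Set.Iic (τ z.2))
    (s' := fun z => Set.Ioi (τ z.2)) (u := fun z => (z.1 : ℝ)⁻¹)
    (v := fun z => a z.2 / (1 - a z.2) / z.1) (hp i) (measurable_sdIndexPair_comp hp)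
    (hindep.indepFun_apply_comp_of_forall_ne hp i measurable_sdIndexPair
      fun _ _ => sdIndexPair_congr) (fun _ => sdIndexPair_mem hm) (fun _ => measurableSet_Iic)
    (fun _ => measurableSet_Ioi) fun z hz => by
      have hk := (mem_product.1 hz).2
      rw [div_eq_mul_inv _ (z.1 : ℝ), ← mul_assoc]
      exact mul_le_mul_of_nonneg_right
        (measureReal_Iic_le_measureReal_Ioi_mul (hp i) (ha _ hk) (ha1 _ hk)) (by positivity)

variable [IsFiniteMeasure P]

lemma integrable_rejWeight (hm : 1 ≤ m) (hp : ∀ j, Measurable (p j)) :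
    Integrable (fun ω => rejWeight τ (fun j => p j ω) i) P :=
  integrable_indicator_comp (s := fun z => Set.Iic (τ z.2)) (hp i) (measurable_sdIndexPair_comp hp)
    (fun _ => sdIndexPair_mem hm) (fun _ => measurableSet_Iic) fun z => (z.1 : ℝ)⁻¹

lemma integrable_accWeight (hm : 1 ≤ m) (hp : ∀ j, Measurable (p j)) (g : ℕ → ℝ) :
    Integrable (fun ω => accWeight τ g (fun j => p j ω) i) P :=
  integrable_indicator_comp (s := fun z => Set.Ioi (τ z.2)) (hp i) (measurable_sdIndexPair_comp hp)
    (fun _ => sdIndexPair_mem hm) (fun _ => measurableSet_Ioi) fun z => g z.2 / z.1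

end Weights

theorem fdr_sd_le_nonadaptive_bound_general
    {Ω : Type*} [MeasurableSpace Ω] (P : Measure Ω) [IsProbabilityMeasure P]
    (m : ℕ) (hm : 1 ≤ m)
    (p : Fin m → Ω → ℝ) (hmeas : ∀ i, Measurable (p i))
    (hindep : iIndepFun p P)
    (H0 : Finset (Fin m))
    (F : Fin m → ℝ → ℝ)
    (hFrange : ∀ i, ∀ t ∈ Set.Icc (0 : ℝ) 1, F i t ∈ Set.Icc (0 : ℝ) 1)
    (hnull : ∀ i ∈ H0, ∀ t ∈ Set.Icc (0 : ℝ) 1,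
      P {ω | p i ω ≤ t} ≤ ENNReal.ofReal (F i t))
    (τ : ℕ → ℝ)
    (hτmono : ∀ k l, k ≤ l → l ≤ m → τ k ≤ τ l)
    (hτ01 : ∀ k ≤ m, τ k ∈ Set.Icc (0 : ℝ) 1)
    (hFτk : ∀ i, ∀ k, 1 ≤ k → k ≤ m → F i (τ k) < 1) :
    ∫ ω, FDP m H0 (rejSD m τ (fun j => p j ω)) ∂P
      ≤ (Finset.Icc 1 m).sup' (Finset.nonempty_Icc.mpr hm)
          (fun k => (1 / (k : ℝ)) * ∑ i : Fin m, F i (τ k) / (1 - F i (τ k))) := by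
  have hτ : MonotoneOn τ (Set.Iic m) := fun k _ l hl hkl => hτmono k l hkl hl
  have hFlt i k (hk : k ∈ Icc 1 m) : F i (τ k) < 1 := hFτk i k (mem_Icc.1 hk).1 (mem_Icc.1 hk).2
  have hFnonneg i k (hk : k ∈ Icc 1 m) : 0 ≤ F i (τ k) := (hFrange i _ (hτ01 k (mem_Icc.1 hk).2)).1
  set g : Fin m → ℕ → ℝ := fun i k => F i (τ k) / (1 - F i (τ k))
  have hrej i := integrable_rejWeight (P := P) (τ := τ) (i := i) hm hmeas
  have hacc i := integrable_accWeight (P := P) (τ := τ) (i := i) hm hmeas (g i)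
  calc ∫ ω, FDP m H0 (rejSD m τ (fun j => p j ω)) ∂P
      ≤ ∫ ω, ∑ i ∈ H0, rejWeight τ (fun j => p j ω) i ∂P :=
        integral_mono_of_nonneg (ae_of_all _ fun _ => FDP_nonneg _ _)
          (integrable_finsetSum _ fun i _ => hrej i) (ae_of_all _ fun _ => FDP_rejSD_le hm hτ H0)
    _ = ∑ i ∈ H0, ∫ ω, rejWeight τ (fun j => p j ω) i ∂P := integral_finsetSum _ fun i _ => hrej i
    _ ≤ ∑ i ∈ H0, ∫ ω, accWeight τ (g i) (fun j => p j ω) i ∂P := sum_le_sum fun i hi =>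
        integral_rejWeight_le_integral_accWeight hm hmeas hindep (fun k hk =>
          ENNReal.toReal_le_of_le_ofReal (hFnonneg i k hk) (hnull i hi _ (hτ01 k (mem_Icc.1 hk).2)))
          (hFlt i)
    _ = ∫ ω, ∑ i ∈ H0, accWeight τ (g i) (fun j => p j ω) i ∂P :=
        (integral_finsetSum _ fun i _ => hacc i).symm
    _ ≤ _ := (integral_mono (integrable_finsetSum _ fun i _ => hacc i) (integrable_const _)
          fun _ => sum_accWeight_le_sup' hm hτ H0 g fun i k hk =>
            div_nonneg (hFnonneg i k hk) (sub_nonneg.2 (hFlt i k hk).le)).trans_eq (by simp [g])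

/-- non-adaptive heterogeneous FDR bound for the step-down procedure. -/
theorem fdr_sd_le_nonadaptive_bound
    {Ω : Type*} [MeasurableSpace Ω] (P : Measure Ω) [IsProbabilityMeasure P]
    (m : ℕ) (hm : 1 ≤ m)
    (p : Fin m → Ω → ℝ) (hmeas : ∀ i, Measurable (p i))
    (hp01 : ∀ i ω, p i ω ∈ Set.Icc (0 : ℝ) 1)
    (hindep : iIndepFun p P)
    (H0 : Finset (Fin m))
    (F : Fin m → ℝ → ℝ)
    (hFmono : ∀ i, MonotoneOn (F i) (Set.Icc 0 1))
    (hFrange : ∀ i, ∀ t ∈ Set.Icc (0 : ℝ) 1, F i t ∈ Set.Icc (0 : ℝ) 1)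
    (hF0 : ∀ i, F i 0 = 0) (hF1 : ∀ i, F i 1 = 1)
    (hnull : ∀ i ∈ H0, ∀ t ∈ Set.Icc (0 : ℝ) 1,
      P {ω | p i ω ≤ t} ≤ ENNReal.ofReal (F i t))
    (τ : ℕ → ℝ) (hτ0 : τ 0 = 0)
    (hτmono : ∀ k l, k ≤ l → l ≤ m → τ k ≤ τ l)
    (hτ01 : ∀ k ≤ m, τ k ∈ Set.Icc (0 : ℝ) 1)
    (hFτk : ∀ i, ∀ k, 1 ≤ k → k ≤ m → F i (τ k) < 1) :
    ∫ ω, FDP m H0 (rejSD m τ (fun j => p j ω)) ∂P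
      ≤ (Finset.Icc 1 m).sup' (Finset.nonempty_Icc.mpr hm)
          (fun k => (1 / (k : ℝ)) * ∑ i : Fin m, F i (τ k) / (1 - F i (τ k))) :=
  fdr_sd_le_nonadaptive_bound_general P m hm p hmeas hindep H0 F hFrange hnull τ hτmono hτ01 hFτk
end
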